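/- arXiv:2308.14783 — 2 statements merged into one kernel-verified Lean document; each statement's English description precedes it below -/
import Mathlib

section
/- (One-iteration contraction of the sub-optimality gap at a tree node, Theorem 1 for a single iteration.) In the setting of the per-step expected improvement statement (convex ℓ*_i, disjoint blocks S_1, …, S_K, block-supported random updates Δ_k, weights β_k summing to 1, Θ_k ∈ [0,1), expected local improvement ∫ ε_{S_k}(α + Δ_k) dμ ≤ Θ_k ε_{S_k}(α), and integrability), let Q = S_1 ∪ ⋯ ∪ S_K and assume additionally that {D(β) : β_i = α_i for all i ∉ Q} is bounded above, that ω ↦ ε_Q(α + Σ_k β_k Δ_k(ω)) is integrable, and that for γ > 0, ρ ≥ 0 the local-to-global bound Σ_{k=1}^K ε_{S_k}(α) ≥ (λmγ/(ρ + λmγ)) · ε_Q(α) holds. Then ∫ ε_Q(α + Σ_k β_k Δ_k(ω)) dμ(ω) ≤ ( 1 − ( min_{k=1,…,K} (1 − Θ_k) β_k ) · λmγ/(ρ + λmγ) ) · ε_Q(α). -/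
/-! The supremum defining `ε_S(α)` depends on `α` only outside `S`, so moving `α` inside `S`
changes the gap by exactly minus the change of `D`. As `D` is concave, Jensen's inequality for
`α + Σₖ βₖ Δₖ = Σₖ βₖ (α + Δₖ)` bounds the new gap at `Q` by
`ε_Q(α) − Σₖ βₖ (ε_{S_k}(α) − ε_{S_k}(α + Δₖ))`. Taking expectations and using the expected local
improvement leaves `ε_Q(α) − Σₖ (1 − Θₖ) βₖ ε_{S_k}(α)`, and the local-to-global bound turns this
sum into a multiple of `ε_Q(α)`. -/

open scoped BigOperators
open MeasureTheory

/-- Local sub-optimality gap over an index set `S`: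
`ε_S(α) = sup {D(β) : β agrees with α outside S} − D(α)`. -/
noncomputable def locGap {m : ℕ} (D : (Fin m → ℝ) → ℝ) (S : Set (Fin m))
    (α : Fin m → ℝ) : ℝ :=
  sSup (D '' {β | ∀ i ∉ S, β i = α i}) - D α

section

open Set Finset

theorem convexOn_sum {ι E : Type*} [AddCommMonoid E] [Module ℝ E] {s : Set E} (hs : Convex ℝ s)
    (t : Finset ι) {f : ι → E → ℝ} (hf : ∀ i ∈ t, ConvexOn ℝ s (f i)) :
    ConvexOn ℝ s fun x => ∑ i ∈ t, f i x := by
  refine ⟨hs, fun x hx y hy a b ha hb hab => ?_⟩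
  simp only [smul_eq_mul, mul_sum, ← sum_add_distrib]
  exact sum_le_sum fun i hi => (hf i hi).2 hx hy ha hb hab

theorem concaveOn_neg_mul_sq_norm_sub_mul_sum {ι E : Type*} [Fintype ι] [NormedAddCommGroup E]
    [NormedSpace ℝ E] (L : (ι → ℝ) →ₗ[ℝ] E) {a c : ℝ} (ha : 0 ≤ a) (hc : 0 ≤ c)
    {ℓ : ι → ℝ → ℝ} (hℓ : ∀ i, ConvexOn ℝ univ (ℓ i)) :
    ConcaveOn ℝ univ fun α => -a * ‖L α‖ ^ 2 - c * ∑ i, ℓ i (-(α i)) := by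
  have hsq : ConvexOn ℝ univ fun α => ‖L α‖ ^ 2 :=
    ((convexOn_norm convex_univ).pow (fun _ _ => norm_nonneg _) 2).comp_linearMap L
  have hsum : ConvexOn ℝ univ fun α : ι → ℝ => ∑ i, ℓ i (-(α i)) :=
    convexOn_sum convex_univ _ fun i _ => by
      have h := (hℓ i).comp_linearMap (-LinearMap.proj (R := ℝ) (φ := fun _ : ι => ℝ) i)
      rw [preimage_univ] at h
      exact h
  refine ((hsq.smul ha).add (hsum.smul hc)).neg.congr fun α _ => ?_
  simp only [Pi.neg_apply, Pi.add_apply, smul_eq_mul]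
  ring

theorem locGap_add_apply_eq_of_eqOn_compl {m : ℕ} {D : (Fin m → ℝ) → ℝ} {S : Set (Fin m)}
    {α α' : Fin m → ℝ} (h : ∀ i ∉ S, α' i = α i) :
    locGap D S α' + D α' = locGap D S α + D α := by
  have hfiber : {β : Fin m → ℝ | ∀ i ∉ S, β i = α' i} = {β | ∀ i ∉ S, β i = α i} := by
    ext β
    exact forall₂_congr fun i hi => by rw [h i hi]
  simp [locGap, hfiber]

theorem locGap_nonneg {m : ℕ} {D : (Fin m → ℝ) → ℝ} {S : Set (Fin m)} {α : Fin m → ℝ}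
    (h : BddAbove (D '' {β | ∀ i ∉ S, β i = α i})) : 0 ≤ locGap D S α :=
  sub_nonneg.2 (le_csSup h ⟨α, fun _ _ => rfl, rfl⟩)

theorem locGap_add_sum_smul_le {m : ℕ} {κ : Type*} [Fintype κ] {D : (Fin m → ℝ) → ℝ}
    (hD : ConcaveOn ℝ univ D) {S : κ → Set (Fin m)} {Q : Set (Fin m)} (hSQ : ∀ k, S k ⊆ Q)
    {Δ : κ → Fin m → ℝ} (hsupp : ∀ k, ∀ i ∉ S k, Δ k i = 0) {β : κ → ℝ}
    (hβ0 : ∀ k, 0 ≤ β k) (hβ1 : ∑ k, β k = 1) (α : Fin m → ℝ) :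
    locGap D Q (α + ∑ k, β k • Δ k) ≤
      locGap D Q α - ∑ k, β k * locGap D (S k) α + ∑ k, β k * locGap D (S k) (α + Δ k) := by
  have hQ : locGap D Q (α + ∑ k, β k • Δ k) + D (α + ∑ k, β k • Δ k) = locGap D Q α + D α :=
    locGap_add_apply_eq_of_eqOn_compl fun i hi => by
      simp [hsupp _ i fun h => hi (hSQ _ h)]
  have hS : ∀ k, locGap D (S k) (α + Δ k) = locGap D (S k) α + D α - D (α + Δ k) := fun k => by
    linarith [locGap_add_apply_eq_of_eqOn_compl (D := D) (S := S k) fun i hi =>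
      show (α + Δ k) i = α i by simp [hsupp k i hi]]
  have hjensen : ∑ k, β k * D (α + Δ k) ≤ D (α + ∑ k, β k • Δ k) := by
    have h := hD.le_map_sum (t := univ) (fun k _ => hβ0 k) hβ1 (p := fun k => α + Δ k)
      fun _ _ => mem_univ _
    simpa [smul_add, sum_add_distrib, ← sum_smul, hβ1] using h
  simp only [hS, mul_sub, mul_add, sum_add_distrib, sum_sub_distrib,
    ← sum_mul, hβ1, one_mul]
  linarith

theorem integral_le_add_sum_mul_integral {Ω κ : Type*} [MeasurableSpace Ω] {μ : Measure Ω}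
    [IsProbabilityMeasure μ] [Fintype κ] {f : Ω → ℝ} {g : κ → Ω → ℝ} (hf : Integrable f μ)
    (hg : ∀ k, Integrable (g k) μ) {c : ℝ} {w : κ → ℝ} (h : ∀ ω, f ω ≤ c + ∑ k, w k * g k ω) :
    ∫ ω, f ω ∂μ ≤ c + ∑ k, w k * ∫ ω, g k ω ∂μ := by
  have hint : Integrable (fun ω => ∑ k, w k * g k ω) μ :=
    integrable_finsetSum _ fun k _ => (hg k).const_mul (w k)
  calc ∫ ω, f ω ∂μ ≤ ∫ ω, (c + ∑ k, w k * g k ω) ∂μ :=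
        integral_mono hf ((integrable_const c).add hint) h
    _ = c + ∑ k, w k * ∫ ω, g k ω ∂μ := by
        rw [integral_add (integrable_const c) hint,
          integral_finsetSum _ fun k _ => (hg k).const_mul (w k)]
        simp [integral_const_mul]

theorem mul_le_sum_mul_of_le_sum {κ : Type*} [Fintype κ] {b s : ℝ} {w g : κ → ℝ} (hb : 0 ≤ b)
    (hbw : ∀ k, b ≤ w k) (hg : ∀ k, 0 ≤ g k) (hs : s ≤ ∑ k, g k) : b * s ≤ ∑ k, w k * g k :=
  calc b * s ≤ b * ∑ k, g k := mul_le_mul_of_nonneg_left hs hb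
    _ = ∑ k, b * g k := mul_sum _ _ _
    _ ≤ ∑ k, w k * g k := sum_le_sum fun k _ => mul_le_mul_of_nonneg_right (hbw k) (hg k)

end

theorem gdca_one_iteration_contraction_general
    (m d K : ℕ) (hK : 0 < K)
    (x : Fin m → EuclideanSpace ℝ (Fin d))
    (lam : ℝ) (hlam : 0 < lam)
    (ℓs : Fin m → ℝ → ℝ) (hconv : ∀ i, ConvexOn ℝ Set.univ (ℓs i))
    (A : (Fin m → ℝ) → EuclideanSpace ℝ (Fin d))
    (hA : ∀ α, A α = (1 / (lam * m)) • ∑ i, α i • x i)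
    (D : (Fin m → ℝ) → ℝ)
    (hD : ∀ α, D α = -(lam / 2) * ‖A α‖ ^ 2 - (1 / m) * ∑ i, ℓs i (-(α i)))
    (Ω : Type*) [MeasurableSpace Ω] (μ : Measure Ω) [IsProbabilityMeasure μ]
    (S : Fin K → Set (Fin m))
    (Q : Set (Fin m)) (hQ : Q = ⋃ k, S k)
    (Δ : Fin K → Ω → Fin m → ℝ)
    (hsupp : ∀ k ω, ∀ i ∉ S k, Δ k ω i = 0)
    (α : Fin m → ℝ)
    (hbddS : ∀ k, BddAbove (D '' {β | ∀ i ∉ S k, β i = α i}))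
    (β : Fin K → ℝ) (hβ0 : ∀ k, 0 ≤ β k)
    (hβsum : ∑ k, β k = 1)
    (Θ : Fin K → ℝ) (hΘ1 : ∀ k, Θ k < 1)
    (γ ρ : ℝ)
    (hintε : ∀ k, Integrable (fun ω => locGap D (S k) (α + Δ k ω)) μ)
    (hintQ : Integrable (fun ω => locGap D Q (α + ∑ k, β k • Δ k ω)) μ)
    (himp : ∀ k, ∫ ω, locGap D (S k) (α + Δ k ω) ∂μ ≤ Θ k * locGap D (S k) α)
    (hlocglob : lam * m * γ / (ρ + lam * m * γ) * locGap D Q α ≤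
      ∑ k, locGap D (S k) α) :
    ∫ ω, locGap D Q (α + ∑ k, β k • Δ k ω) ∂μ ≤
      (1 - (Finset.univ.inf' ⟨⟨0, hK⟩, Finset.mem_univ _⟩ fun k => (1 - Θ k) * β k) *
        (lam * m * γ / (ρ + lam * m * γ))) * locGap D Q α := by
  have hDconc : ConcaveOn ℝ Set.univ D := by
    have hDL : D = fun a => -(lam / 2) *
        ‖((1 / (lam * m)) • Fintype.linearCombination ℝ x) a‖ ^ 2 - 1 / m * ∑ i, ℓs i (-(a i)) :=
      funext fun a => by rw [hD, hA, LinearMap.smul_apply, Fintype.linearCombination_apply]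
    exact hDL ▸ concaveOn_neg_mul_sq_norm_sub_mul_sum _ (by positivity) (by positivity) hconv
  set b := Finset.univ.inf' ⟨⟨0, hK⟩, Finset.mem_univ _⟩ fun k => (1 - Θ k) * β k
  have hb : 0 ≤ b := Finset.le_inf' _ _ fun k _ => mul_nonneg (sub_nonneg.2 (hΘ1 k).le) (hβ0 k)
  calc ∫ ω, locGap D Q (α + ∑ k, β k • Δ k ω) ∂μ
      ≤ locGap D Q α - ∑ k, β k * locGap D (S k) α
          + ∑ k, β k * ∫ ω, locGap D (S k) (α + Δ k ω) ∂μ :=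
        integral_le_add_sum_mul_integral hintQ hintε fun ω =>
          locGap_add_sum_smul_le hDconc (fun k => hQ ▸ Set.subset_iUnion S k)
            (fun k => hsupp k ω) hβ0 hβsum α
    _ ≤ locGap D Q α - ∑ k, β k * locGap D (S k) α + ∑ k, β k * (Θ k * locGap D (S k) α) := by
        gcongr with k
        exacts [hβ0 k, himp k]
    _ = locGap D Q α - ∑ k, (1 - Θ k) * β k * locGap D (S k) α := by
        rw [sub_add, ← Finset.sum_sub_distrib]
        exact congrArg _ (Finset.sum_congr rfl fun k _ => by ring)
    _ ≤ locGap D Q α - b * (lam * m * γ / (ρ + lam * m * γ) * locGap D Q α) := by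
        gcongr
        exact mul_le_sum_mul_of_le_sum hb (fun k => Finset.inf'_le _ (Finset.mem_univ k))
          (fun k => locGap_nonneg (hbddS k)) hlocglob
    _ = _ := by ring

/-- One-iteration contraction of the sub-optimality gap at a tree node
(Theorem 1 for a single iteration):
`𝔼[ε_Q(α + Σₖ βₖ Δₖ)] ≤ (1 − (minₖ (1 − Θₖ)βₖ)·λmγ/(ρ + λmγ)) · ε_Q(α)`. -/
theorem gdca_one_iteration_contraction
    (m d K : ℕ) (hm : 0 < m) (hd : 0 < d) (hK : 0 < K)
    (x : Fin m → EuclideanSpace ℝ (Fin d)) (hx : ∀ i, ‖x i‖ ≤ 1)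
    (lam : ℝ) (hlam : 0 < lam)
    (ℓs : Fin m → ℝ → ℝ) (hconv : ∀ i, ConvexOn ℝ Set.univ (ℓs i))
    (A : (Fin m → ℝ) → EuclideanSpace ℝ (Fin d))
    (hA : ∀ α, A α = (1 / (lam * m)) • ∑ i, α i • x i)
    (D : (Fin m → ℝ) → ℝ)
    (hD : ∀ α, D α = -(lam / 2) * ‖A α‖ ^ 2 - (1 / m) * ∑ i, ℓs i (-(α i)))
    (Ω : Type*) [MeasurableSpace Ω] (μ : Measure Ω) [IsProbabilityMeasure μ]
    (S : Fin K → Set (Fin m))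
    (hdisj : ∀ k k', k ≠ k' → Disjoint (S k) (S k'))
    (Q : Set (Fin m)) (hQ : Q = ⋃ k, S k)
    (Δ : Fin K → Ω → Fin m → ℝ) (hmeas : ∀ k, Measurable (Δ k))
    (hsupp : ∀ k ω, ∀ i ∉ S k, Δ k ω i = 0)
    (α : Fin m → ℝ)
    (hbddS : ∀ k, BddAbove (D '' {β | ∀ i ∉ S k, β i = α i}))
    (hbddQ : BddAbove (D '' {β | ∀ i ∉ Q, β i = α i}))
    (β : Fin K → ℝ) (hβ0 : ∀ k, 0 ≤ β k) (hβ1 : ∀ k, β k ≤ 1)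
    (hβsum : ∑ k, β k = 1)
    (Θ : Fin K → ℝ) (hΘ0 : ∀ k, 0 ≤ Θ k) (hΘ1 : ∀ k, Θ k < 1)
    (γ ρ : ℝ) (hγ : 0 < γ) (hρ : 0 ≤ ρ)
    (hintD : Integrable (fun ω => D (α + ∑ k, β k • Δ k ω)) μ)
    (hintε : ∀ k, Integrable (fun ω => locGap D (S k) (α + Δ k ω)) μ)
    (hintQ : Integrable (fun ω => locGap D Q (α + ∑ k, β k • Δ k ω)) μ)
    (himp : ∀ k, ∫ ω, locGap D (S k) (α + Δ k ω) ∂μ ≤ Θ k * locGap D (S k) α)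
    (hlocglob : lam * m * γ / (ρ + lam * m * γ) * locGap D Q α ≤
      ∑ k, locGap D (S k) α) :
    ∫ ω, locGap D Q (α + ∑ k, β k • Δ k ω) ∂μ ≤
      (1 - (Finset.univ.inf' ⟨⟨0, hK⟩, Finset.mem_univ _⟩ fun k => (1 - Θ k) * β k) *
        (lam * m * γ / (ρ + lam * m * γ))) * locGap D Q α :=
  gdca_one_iteration_contraction_general m d K hK x lam hlam ℓs hconv A hA D hD Ω μ S Q hQ Δ hsupp α
    hbddS β hβ0 hβsum Θ hΘ1 γ ρ hintε hintQ himp hlocglob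
end

section
/- (Proposition 1: geometric improvement of LocalSDCA at a leaf node.) Suppose λ > 0, γ > 0, ‖x_i‖₂ ≤ 1 for all i, and each ℓ*_i is γ-strongly convex. Let B ⊆ {1, …, m} be nonempty with |B| = m_B, let α^{(0)} ∈ ℝ^m, and assume for every β ∈ ℝ^m agreeing with α^{(0)} outside B that the set {D(β') : β'_i = β_i for all i ∉ B} is bounded above. Given a sequence of indices (i_1, …, i_{T_p}) ∈ B^{T_p}, define iterates by α^{(h)} = α^{(h−1)} + Δ_h e_{i_h}, where Δ_h maximizes c ↦ D(α^{(h−1)} + c e_{i_h}). Then the average over all m_B^{T_p} index sequences of the final local sub-optimality gap satisfies (1/m_B^{T_p}) Σ_{(i_1,…,i_{T_p}) ∈ B^{T_p}} ε_B(α^{(T_p)}) ≤ ( 1 − ( λmγ/(1 + λmγ) ) · (1/m_B) )^{T_p} · ε_B(α^{(0)}); i.e., Assumption 1 holds with Θ_p = (1 − (λmγ/(1 + λmγ)) · (1/m_B))^{T_p}. -/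
/-!
Write a point of the slice through `α` (the points agreeing with `α` outside `B`) as `α + δ`.
Dropping the concave quadratic term of `D`, `D (α + δ) ≤ D α - (1/m) ∑ᵢ gᵢ`, where `gᵢ` collects
the linear and loss changes in coordinate `i`. Conversely, `γ`-strong convexity of `ℓ*ᵢ` and
`‖xᵢ‖ ≤ 1` give `D (α + t δᵢ eᵢ) ≥ D α - (t/m) gᵢ` whenever `t ≤ λmγ(1 - t)`, and
`t = λmγ/(1 + λmγ)` is the largest such `t`. Summing over `i ∈ B` and taking the supremum `S` of
`D` over the slice, the exact coordinate maximisers `αᵢ⁺` satisfy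
`∑_{i ∈ B} (S - D αᵢ⁺) ≤ (m_B - t)(S - D α)`.
Averaging over the index chosen at each step thus contracts the summed gap by `1 - t/m_B` per step.
-/

open scoped BigOperators

open Finset Function

theorem Fintype.sum_sum_update {α β M : Type*} [DecidableEq α] [Fintype α] [Fintype β]
    [AddCommMonoid M] (g : (α → β) → M) (i : α) :
    ∑ f, ∑ b, g (update f i b) = Fintype.card β • ∑ f, g f := by
  let e := Equiv.funSplitAt i β
  have hupd : ∀ f b, update f i b = e.symm (b, (e f).2) := by
    intro f b; ext j; by_cases hj : j = i <;> simp [e, hj, update_of_ne]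
  simp only [hupd]
  rw [← e.symm.sum_comp, ← e.symm.sum_comp, Fintype.sum_prod_type, Fintype.sum_prod_type]
  simp only [Equiv.apply_symm_apply, sum_const, card_univ]
  rw [Finset.sum_comm]

lemma sum_le_pow_mul_sum_of_sum_update_le {κ : Type*} [Fintype κ] [Nonempty κ] {T : ℕ}
    (G : (Fin T → κ) → ℕ → ℝ) {ρ : ℝ} (hρ : 0 ≤ ρ)
    (hG : ∀ seq (h : Fin T), ∑ b, G (update seq h b) (h + 1) ≤ Fintype.card κ * ρ * G seq h) :
    ∑ seq, G seq T ≤ ρ ^ T * ∑ seq, G seq 0 := by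
  have hκ : (0 : ℝ) < Fintype.card κ := by exact_mod_cast Fintype.card_pos
  suffices ∀ h ≤ T, ∑ seq, G seq h ≤ ρ ^ h * ∑ seq, G seq 0 from this T le_rfl
  intro h
  induction h with
  | zero => simp
  | succ h ih =>
    intro hh
    have hstep : Fintype.card κ * ∑ seq, G seq (h + 1) ≤ Fintype.card κ * (ρ * ∑ seq, G seq h) := by
      rw [← nsmul_eq_mul, ← Fintype.sum_sum_update _ (⟨h, hh⟩ : Fin T), mul_sum, mul_sum]
      exact sum_le_sum fun seq _ => by simpa [mul_assoc] using hG seq ⟨h, hh⟩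
    calc ∑ seq, G seq (h + 1) ≤ ρ * ∑ seq, G seq h := le_of_mul_le_mul_left hstep hκ
      _ ≤ ρ * (ρ ^ h * ∑ seq, G seq 0) := by gcongr; exact ih (by omega)
      _ = ρ ^ (h + 1) * ∑ seq, G seq 0 := by ring

section AgreeOutside

variable {ι : Type*}

def agreeOutside (S : Set ι) (α : ι → ℝ) : Set (ι → ℝ) := {β | ∀ i ∉ S, β i = α i}

lemma agreeOutside_eq_of_mem {S : Set ι} {α β : ι → ℝ} (hβ : β ∈ agreeOutside S α) :
    agreeOutside S β = agreeOutside S α := by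
  ext γ
  exact forall₂_congr fun i hi => by rw [hβ i hi]

lemma add_single_mem_agreeOutside [DecidableEq ι] {S : Set ι} {α β : ι → ℝ} {i : ι}
    (hi : i ∈ S) (hβ : β ∈ agreeOutside S α) (c : ℝ) :
    β + Pi.single i c ∈ agreeOutside S α := fun j hj => by
  simp [Pi.single_eq_of_ne (ne_of_mem_of_not_mem hi hj).symm, hβ j hj]

lemma iterate_mem_agreeOutside [DecidableEq ι] {B : Finset ι} {T : ℕ}
    (a : (Fin T → B) → ℕ → ι → ℝ) (α0 : ι → ℝ) (ha0 : ∀ seq, a seq 0 = α0)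
    (hnext : ∀ seq (h : Fin T), ∃ Δ, a seq (h + 1) = a seq h + Pi.single (seq h : ι) Δ) :
    ∀ seq, ∀ h ≤ T, a seq h ∈ agreeOutside B α0 := by
  intro seq h
  induction h with
  | zero => exact fun _ => ha0 seq ▸ fun _ _ => rfl
  | succ h ih =>
    intro hh
    obtain ⟨Δ, hΔ⟩ := hnext seq ⟨h, hh⟩
    rw [hΔ]
    exact add_single_mem_agreeOutside (seq _).2 (ih (Nat.le_of_succ_le hh)) Δ

lemma locGap_eq_of_mem {m : ℕ} (D : (Fin m → ℝ) → ℝ) {S : Set (Fin m)} {α β : Fin m → ℝ}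
    (hβ : β ∈ agreeOutside S α) : locGap D S β = sSup (D '' agreeOutside S α) - D β := by
  rw [locGap, ← agreeOutside, agreeOutside_eq_of_mem hβ]

end AgreeOutside

section SDCA

variable {ι E : Type*} [Fintype ι] [NormedAddCommGroup E] [InnerProductSpace ℝ E]

noncomputable def sdcaPrimal (x : ι → E) (lam : ℝ) (α : ι → ℝ) : E :=
  (1 / (lam * Fintype.card ι)) • ∑ i, α i • x i

noncomputable def sdcaDual (x : ι → E) (lam : ℝ) (ℓs : ι → ℝ → ℝ) (α : ι → ℝ) : ℝ :=
  -(lam / 2) * ‖sdcaPrimal x lam α‖ ^ 2 - (1 / Fintype.card ι) * ∑ i, ℓs i (-(α i))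

variable (x : ι → E) (lam : ℝ) (ℓs : ι → ℝ → ℝ)

lemma sdcaPrimal_add (α δ : ι → ℝ) :
    sdcaPrimal x lam (α + δ) = sdcaPrimal x lam α + sdcaPrimal x lam δ := by
  simp only [sdcaPrimal, Pi.add_apply, add_smul, sum_add_distrib, smul_add]

lemma sdcaPrimal_single [DecidableEq ι] (i : ι) (c : ℝ) :
    sdcaPrimal x lam (Pi.single i c) = (c / (lam * Fintype.card ι)) • x i := by
  rw [sdcaPrimal, Fintype.sum_eq_single i fun j hj => by simp [hj],
    Pi.single_eq_same, smul_smul, one_div_mul_eq_div]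

lemma lam_mul_inner_sdcaPrimal [Nonempty ι] (hlam : lam ≠ 0) (w : E) (δ : ι → ℝ) :
    lam * inner ℝ w (sdcaPrimal x lam δ) = 1 / Fintype.card ι * ∑ i, δ i * inner ℝ w (x i) := by
  have : (Fintype.card ι : ℝ) ≠ 0 := by positivity
  simp only [sdcaPrimal, inner_smul_right, inner_sum]
  field_simp

lemma sdcaDual_add (α δ : ι → ℝ) :
    sdcaDual x lam ℓs (α + δ) = sdcaDual x lam ℓs α
      - lam * inner ℝ (sdcaPrimal x lam α) (sdcaPrimal x lam δ)
      - lam / 2 * ‖sdcaPrimal x lam δ‖ ^ 2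
      - 1 / Fintype.card ι * ∑ i, (ℓs i (-(α i + δ i)) - ℓs i (-(α i))) := by
  simp only [sdcaDual, sdcaPrimal_add, norm_add_sq_real, Pi.add_apply, sum_sub_distrib]
  ring

lemma sdcaDual_add_le [Nonempty ι] (hlam : 0 < lam) (α δ : ι → ℝ) :
    sdcaDual x lam ℓs (α + δ) ≤ sdcaDual x lam ℓs α - 1 / Fintype.card ι *
      ∑ i, (δ i * inner ℝ (sdcaPrimal x lam α) (x i) + (ℓs i (-(α i + δ i)) - ℓs i (-(α i)))) := by
  rw [sdcaDual_add, lam_mul_inner_sdcaPrimal x lam hlam.ne', sum_add_distrib]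
  have : 0 ≤ lam / 2 * ‖sdcaPrimal x lam δ‖ ^ 2 := by positivity
  linarith

lemma sdcaDual_add_single_ge [DecidableEq ι] [Nonempty ι] (hlam : 0 < lam) {γ t : ℝ} {i : ι}
    (hx : ‖x i‖ ≤ 1) (hsc : StrongConvexOn Set.univ γ (ℓs i)) (ht0 : 0 ≤ t) (ht1 : t ≤ 1)
    (ht : t ≤ lam * Fintype.card ι * γ * (1 - t)) (α : ι → ℝ) (δ : ℝ) :
    sdcaDual x lam ℓs α - t / Fintype.card ι *
        (δ * inner ℝ (sdcaPrimal x lam α) (x i) + (ℓs i (-(α i + δ)) - ℓs i (-(α i)))) ≤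
      sdcaDual x lam ℓs (α + Pi.single i (t * δ)) := by
  have hn : (0 : ℝ) < Fintype.card ι := by positivity
  have hlin : lam * inner ℝ (sdcaPrimal x lam α) (sdcaPrimal x lam (Pi.single i (t * δ))) =
      t / Fintype.card ι * (δ * inner ℝ (sdcaPrimal x lam α) (x i)) := by
    rw [sdcaPrimal_single, inner_smul_right]; field_simp
  have hquad : lam / 2 * ‖sdcaPrimal x lam (Pi.single i (t * δ))‖ ^ 2 ≤
      1 / Fintype.card ι * ((1 - t) * t * (γ / 2 * δ ^ 2)) := by
    rw [sdcaPrimal_single, norm_smul, mul_pow, Real.norm_eq_abs, sq_abs]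
    have hx2 : ‖x i‖ ^ 2 ≤ 1 := pow_le_one₀ (norm_nonneg _) hx
    calc lam / 2 * ((t * δ / (lam * Fintype.card ι)) ^ 2 * ‖x i‖ ^ 2)
        ≤ lam / 2 * (t * δ / (lam * Fintype.card ι)) ^ 2 := by
          gcongr; exact mul_le_of_le_one_right (sq_nonneg _) hx2
      _ = t * δ ^ 2 / (2 * Fintype.card ι) * (t / (lam * Fintype.card ι)) := by field_simp
      _ ≤ t * δ ^ 2 / (2 * Fintype.card ι) * (γ * (1 - t)) := by
          gcongr; rw [div_le_iff₀ (by positivity)]; linarith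
      _ = _ := by field_simp
  have hloss : ∑ j, (ℓs j (-(α j + (Pi.single i (t * δ) : ι → ℝ) j)) - ℓs j (-(α j))) =
      ℓs i (-(α i + t * δ)) - ℓs i (-(α i)) := by
    rw [Fintype.sum_eq_single i fun j hj => by simp [Pi.single_eq_of_ne hj], Pi.single_eq_same]
  have hconv := hsc.2 (Set.mem_univ (-(α i))) (Set.mem_univ (-(α i + δ)))
    (sub_nonneg.2 ht1) ht0 (sub_add_cancel 1 t)
  simp only [smul_eq_mul, Real.norm_eq_abs, sq_abs] at hconv
  rw [show (1 - t) * -α i + t * -(α i + δ) = -(α i + t * δ) by ring,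
    show -α i - -(α i + δ) = δ by ring] at hconv
  rw [sdcaDual_add, hlin, hloss]
  linear_combination hquad + (1 / (Fintype.card ι : ℝ)) * hconv

lemma le_sum_sdcaDual_add_single [DecidableEq ι] [Nonempty ι] (hlam : 0 < lam) {γ t : ℝ}
    (hx : ∀ i, ‖x i‖ ≤ 1) (hsc : ∀ i, StrongConvexOn Set.univ γ (ℓs i)) (ht0 : 0 ≤ t)
    (ht1 : t ≤ 1) (ht : t ≤ lam * Fintype.card ι * γ * (1 - t)) (B : Finset ι)
    (α δ : ι → ℝ) (hδ : ∀ i ∉ B, δ i = 0) :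
    #B * sdcaDual x lam ℓs α + t * (sdcaDual x lam ℓs (α + δ) - sdcaDual x lam ℓs α) ≤
      ∑ i ∈ B, sdcaDual x lam ℓs (α + Pi.single i (t * δ i)) := by
  let g : ι → ℝ := fun i =>
    δ i * inner ℝ (sdcaPrimal x lam α) (x i) + (ℓs i (-(α i + δ i)) - ℓs i (-(α i)))
  have hsupp : ∑ i, g i = ∑ i ∈ B, g i :=
    (sum_subset (subset_univ B) fun i _ hi => by simp [g, hδ i hi]).symm
  have hdescent : sdcaDual x lam ℓs (α + δ) ≤
      sdcaDual x lam ℓs α - 1 / Fintype.card ι * ∑ i ∈ B, g i := by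
    rw [← hsupp]; exact sdcaDual_add_le x lam ℓs hlam α δ
  have hcoord : ∀ i ∈ B, sdcaDual x lam ℓs α - t / Fintype.card ι * g i ≤
      sdcaDual x lam ℓs (α + Pi.single i (t * δ i)) := fun i _ =>
    sdcaDual_add_single_ge x lam ℓs hlam (hx i) (hsc i) ht0 ht1 ht α (δ i)
  refine le_trans ?_ (sum_le_sum hcoord)
  rw [sum_sub_distrib, sum_const, nsmul_eq_mul, ← mul_sum]
  linear_combination t * hdescent

lemma sum_sSup_sub_sdcaDual_le [DecidableEq ι] [Nonempty ι] (hlam : 0 < lam) {γ t : ℝ}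
    (hx : ∀ i, ‖x i‖ ≤ 1) (hsc : ∀ i, StrongConvexOn Set.univ γ (ℓs i)) (ht0 : 0 < t)
    (ht1 : t ≤ 1) (ht : t ≤ lam * Fintype.card ι * γ * (1 - t))
    (B : Finset ι) (α : ι → ℝ) (αp : B → ι → ℝ)
    (hαp : ∀ (i : B) (c : ℝ),
      sdcaDual x lam ℓs (α + Pi.single (i : ι) c) ≤ sdcaDual x lam ℓs (αp i)) :
    ∑ i, (sSup (sdcaDual x lam ℓs '' agreeOutside B α) - sdcaDual x lam ℓs (αp i)) ≤
      (#B - t) * (sSup (sdcaDual x lam ℓs '' agreeOutside B α) - sdcaDual x lam ℓs α) := by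
  have hgain : ∀ β ∈ agreeOutside B α, #B * sdcaDual x lam ℓs α +
      t * (sdcaDual x lam ℓs β - sdcaDual x lam ℓs α) ≤ ∑ i, sdcaDual x lam ℓs (αp i) := by
    intro β hβ
    have hδ : ∀ i ∉ B, (β - α) i = 0 := fun i hi => sub_eq_zero.2 (hβ i (by simpa using hi))
    have hcoord := le_sum_sdcaDual_add_single x lam ℓs hlam hx hsc ht0.le ht1 ht B α _ hδ
    rw [add_sub_cancel, ← sum_coe_sort B] at hcoord
    exact hcoord.trans (sum_le_sum fun i _ => hαp i _)
  have hsup : sSup (sdcaDual x lam ℓs '' agreeOutside B α) ≤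
      (∑ i, sdcaDual x lam ℓs (αp i) - #B * sdcaDual x lam ℓs α + t * sdcaDual x lam ℓs α) / t := by
    refine csSup_le ⟨sdcaDual x lam ℓs α, α, fun _ _ => rfl, rfl⟩ ?_
    rintro _ ⟨β, hβ, rfl⟩
    rw [le_div_iff₀ ht0]
    linarith [hgain β hβ]
  rw [le_div_iff₀ ht0] at hsup
  rw [sum_sub_distrib, sum_const, card_univ, Fintype.card_coe, nsmul_eq_mul]
  linarith

lemma sum_sSup_sub_sdcaDual_iterate_le [DecidableEq ι] [Nonempty ι] (hlam : 0 < lam) {γ t : ℝ}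
    (hx : ∀ i, ‖x i‖ ≤ 1) (hsc : ∀ i, StrongConvexOn Set.univ γ (ℓs i)) (ht0 : 0 < t)
    (ht1 : t ≤ 1) (ht : t ≤ lam * Fintype.card ι * γ * (1 - t))
    {B : Finset ι} (hB : B.Nonempty) {T : ℕ} (a : (Fin T → B) → ℕ → ι → ℝ) (α0 : ι → ℝ)
    (ha0 : ∀ seq, a seq 0 = α0)
    (haprefix : ∀ seq seq' (h : ℕ), (∀ h' : Fin T, (h' : ℕ) < h → seq h' = seq' h') →
      a seq h = a seq' h)
    (hastep : ∀ seq (h : Fin T), ∃ Δ, a seq (h + 1) = a seq h + Pi.single (seq h : ι) Δ ∧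
      ∀ c, sdcaDual x lam ℓs (a seq h + Pi.single (seq h : ι) c) ≤
        sdcaDual x lam ℓs (a seq (h + 1))) :
    ∑ seq, (sSup (sdcaDual x lam ℓs '' agreeOutside B α0) - sdcaDual x lam ℓs (a seq T)) ≤
      (1 - t / #B) ^ T *
        (#B ^ T * (sSup (sdcaDual x lam ℓs '' agreeOutside B α0) - sdcaDual x lam ℓs α0)) := by
  have : Nonempty B := hB.to_subtype
  have hiter := iterate_mem_agreeOutside a α0 ha0 fun seq h => (hastep seq h).imp fun _ => And.left
  have hB0 : (0 : ℝ) < #B := by exact_mod_cast hB.card_pos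
  have hρ : 0 ≤ 1 - t / #B :=
    sub_nonneg.2 ((div_le_one hB0).2 (ht1.trans (by exact_mod_cast hB.card_pos)))
  set S := sSup (sdcaDual x lam ℓs '' agreeOutside B α0)
  have hstep : ∀ seq (h : Fin T), ∑ b, (S - sdcaDual x lam ℓs (a (update seq h b) (h + 1))) ≤
      Fintype.card B * (1 - t / #B) * (S - sdcaDual x lam ℓs (a seq h)) := by
    intro seq h
    have hpre : ∀ b, a (update seq h b) h = a seq h := fun b =>
      haprefix _ _ _ fun h' hh' => update_of_ne (Fin.ne_of_lt hh') _ _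
    have hopt : ∀ (b : B) c, sdcaDual x lam ℓs (a seq h + Pi.single (b : ι) c) ≤
        sdcaDual x lam ℓs (a (update seq h b) (h + 1)) := fun b c => by
      obtain ⟨_, -, hmax⟩ := hastep (update seq h b) h
      simpa [hpre] using hmax c
    rw [Fintype.card_coe, mul_one_sub, mul_div_cancel₀ _ hB0.ne']
    simpa only [agreeOutside_eq_of_mem (hiter seq h h.2.le)] using
      sum_sSup_sub_sdcaDual_le x lam ℓs hlam hx hsc ht0 ht1 ht B _ _ hopt
  simpa only [ha0, sum_const, card_univ, Fintype.card_fun, Fintype.card_coe, Fintype.card_fin,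
    nsmul_eq_mul, Nat.cast_pow] using sum_le_pow_mul_sum_of_sum_update_le
    (fun seq h => S - sdcaDual x lam ℓs (a seq h)) hρ hstep

end SDCA

theorem local_sdca_geometric_improvement_general
    (m d : ℕ) (hm : 0 < m)
    (x : Fin m → EuclideanSpace ℝ (Fin d)) (hx : ∀ i, ‖x i‖ ≤ 1)
    (lam γ : ℝ) (hlam : 0 < lam) (hγ : 0 < γ)
    (ℓs : Fin m → ℝ → ℝ)
    (hsc : ∀ i, ConvexOn ℝ Set.univ fun b => ℓs i b - γ / 2 * b ^ 2)
    (A : (Fin m → ℝ) → EuclideanSpace ℝ (Fin d))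
    (hA : ∀ α, A α = (1 / (lam * m)) • ∑ i, α i • x i)
    (D : (Fin m → ℝ) → ℝ)
    (hD : ∀ α, D α = -(lam / 2) * ‖A α‖ ^ 2 - (1 / m) * ∑ i, ℓs i (-(α i)))
    (B : Finset (Fin m)) (hB : B.Nonempty)
    (α0 : Fin m → ℝ)
    (Tp : ℕ)
    (a : (Fin Tp → {i // i ∈ B}) → ℕ → Fin m → ℝ)
    (ha0 : ∀ seq, a seq 0 = α0)
    (haprefix : ∀ seq seq' (h : ℕ),
      (∀ h' : Fin Tp, (h' : ℕ) < h → seq h' = seq' h') → a seq h = a seq' h)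
    (hastep : ∀ seq (h : Fin Tp), ∃ Δ : ℝ,
      a seq ((h : ℕ) + 1) =
        a seq h + Δ • (Pi.single (seq h : Fin m) 1 : Fin m → ℝ) ∧
      ∀ c : ℝ, D (a seq h + c • (Pi.single (seq h : Fin m) 1 : Fin m → ℝ)) ≤
        D (a seq ((h : ℕ) + 1))) :
    (1 / (B.card : ℝ) ^ Tp) * ∑ seq : Fin Tp → {i // i ∈ B}, locGap D ↑B (a seq Tp) ≤
      (1 - lam * m * γ / (1 + lam * m * γ) * (1 / (B.card : ℝ))) ^ Tp *
        locGap D ↑B α0 := by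
  have : Nonempty (Fin m) := ⟨⟨0, hm⟩⟩
  obtain rfl : D = sdcaDual x lam ℓs := funext fun α => by
    rw [hD, hA, sdcaDual, sdcaPrimal, Fintype.card_fin]
  have hsc' : ∀ i, StrongConvexOn Set.univ γ (ℓs i) := fun i => by
    simpa [strongConvexOn_iff_convex, Real.norm_eq_abs, sq_abs] using hsc i
  simp only [← Pi.single_smul', smul_eq_mul, mul_one] at hastep
  set t := lam * m * γ / (1 + lam * m * γ) with ht_def
  rw [mul_one_div]
  have hκ : 0 < lam * m * γ := by positivity
  have ht0 : 0 < t := by rw [ht_def]; positivity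
  have ht1 : t ≤ 1 := by rw [ht_def, div_le_one (by positivity)]; linarith
  have ht : t ≤ lam * Fintype.card (Fin m) * γ * (1 - t) := by
    rw [ht_def, Fintype.card_fin]; field_simp; linarith
  have hdecay := sum_sSup_sub_sdcaDual_iterate_le x lam ℓs hlam hx hsc' ht0 ht1 ht hB a α0 ha0
    haprefix hastep
  have hiter := iterate_mem_agreeOutside a α0 ha0 fun seq h => (hastep seq h).imp fun _ => And.left
  rw [sum_congr rfl fun seq _ => locGap_eq_of_mem _ (hiter seq Tp le_rfl),
    locGap_eq_of_mem _ fun _ _ => rfl, one_div_mul_eq_div, div_le_iff₀ (by positivity)]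
  linarith

/-- Proposition 1: geometric improvement of LocalSDCA at a leaf node `B`.
Averaging over all `m_B^{T_p}` coordinate-index sequences, the final local
sub-optimality gap satisfies
`𝔼[ε_B(α^{(T_p)})] ≤ (1 − (λmγ/(1 + λmγ))·(1/m_B))^{T_p} · ε_B(α^{(0)})`. -/
theorem local_sdca_geometric_improvement
    (m d : ℕ) (hm : 0 < m) (hd : 0 < d)
    (x : Fin m → EuclideanSpace ℝ (Fin d)) (hx : ∀ i, ‖x i‖ ≤ 1)
    (lam γ : ℝ) (hlam : 0 < lam) (hγ : 0 < γ)
    (ℓs : Fin m → ℝ → ℝ)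
    (hsc : ∀ i, ConvexOn ℝ Set.univ fun b => ℓs i b - γ / 2 * b ^ 2)
    (A : (Fin m → ℝ) → EuclideanSpace ℝ (Fin d))
    (hA : ∀ α, A α = (1 / (lam * m)) • ∑ i, α i • x i)
    (D : (Fin m → ℝ) → ℝ)
    (hD : ∀ α, D α = -(lam / 2) * ‖A α‖ ^ 2 - (1 / m) * ∑ i, ℓs i (-(α i)))
    (B : Finset (Fin m)) (hB : B.Nonempty)
    (α0 : Fin m → ℝ)
    (hbdd : ∀ β : Fin m → ℝ, (∀ i ∉ (B : Set (Fin m)), β i = α0 i) →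
      BddAbove (D '' {β' | ∀ i ∉ (B : Set (Fin m)), β' i = β i}))
    (Tp : ℕ)
    (a : (Fin Tp → {i // i ∈ B}) → ℕ → Fin m → ℝ)
    (ha0 : ∀ seq, a seq 0 = α0)
    (haprefix : ∀ seq seq' (h : ℕ),
      (∀ h' : Fin Tp, (h' : ℕ) < h → seq h' = seq' h') → a seq h = a seq' h)
    (hastep : ∀ seq (h : Fin Tp), ∃ Δ : ℝ,
      a seq ((h : ℕ) + 1) =
        a seq h + Δ • (Pi.single (seq h : Fin m) 1 : Fin m → ℝ) ∧
      ∀ c : ℝ, D (a seq h + c • (Pi.single (seq h : Fin m) 1 : Fin m → ℝ)) ≤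
        D (a seq ((h : ℕ) + 1))) :
    (1 / (B.card : ℝ) ^ Tp) * ∑ seq : Fin Tp → {i // i ∈ B}, locGap D ↑B (a seq Tp) ≤
      (1 - lam * m * γ / (1 + lam * m * γ) * (1 / (B.card : ℝ))) ^ Tp *
        locGap D ↑B α0 :=
  local_sdca_geometric_improvement_general m d hm x hx lam γ hlam hγ ℓs hsc A hA D hD B hB α0 Tp a
    ha0 haprefix hastep
end
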